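/- In the multicut instance I' = (G', 𝒯) constructed from a multicoloured graph (G, V₁, …, V_r) with |V_i| ≥ 2 for all i and |V| = n, every LP-feasible assignment for the multicut LP-relaxation has cost at least n. Consequently, the optimal cost of the multicut LP-relaxation of I' equals n. -/

import Mathlib

open Finset

/-- The vertices of the multicut gadget graph `G'` built from a multicoloured graph on
vertex set `V` with `r` colour classes: the original vertices `orig v`, the primed
copies `prime v`, and the degree-one terminals `tv v`, `sv v` (attached to `v`),
`sv' v` (attached to `v'`), and `av i`, `bv i` (attached to the endpoints of the path
`P i`). -/
inductive GVert (V : Type*) (r : ℕ) where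
  | orig (v : V)
  | prime (v : V)
  | tv (v : V)
  | sv (v : V)
  | sv' (v : V)
  | av (i : Fin r)
  | bv (i : Fin r)
  deriving DecidableEq, Fintype

/-- The (asymmetric) base relation of the edges of the multicut gadget graph `G'`.
Here `P : V → Fin r` is the partition into classes `V i = P ⁻¹ {i}`, and for each `i`
the equivalence `ord i : Fin (m i) ≃ {v // P v = i}` fixes an arbitrary order of `V i`,
along which the primed copies of `V i` are connected into the path `P i`. -/
def gadgetRel {V : Type*} (G : SimpleGraph V) {r : ℕ} (P : V → Fin r) (m : Fin r → ℕ)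
    (ord : ∀ i, Fin (m i) ≃ {v : V // P v = i}) :
    GVert V r → GVert V r → Prop
  | .orig u, .orig v => G.Adj u v
  | .orig u, .prime v => u = v
  | .prime u, .prime v => ∃ (i : Fin r) (j : Fin (m i)) (hj : (j : ℕ) + 1 < m i),
      (ord i j : {v : V // P v = i}).1 = u ∧
      (ord i ⟨(j : ℕ) + 1, hj⟩ : {v : V // P v = i}).1 = v
  | .tv u, .orig v => u = v
  | .sv u, .orig v => u = v
  | .sv' u, .prime v => u = v
  | .av i, .prime v => ∃ h : 0 < m i, (ord i ⟨0, h⟩ : {v : V // P v = i}).1 = v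
  | .bv i, .prime v =>
      ∃ h : 0 < m i,
        (ord i ⟨m i - 1, Nat.sub_lt h Nat.one_pos⟩ : {v : V // P v = i}).1 = v
  | _, _ => False

/-- The multicut gadget graph `G'` (the symmetrisation of `gadgetRel`). -/
def gadgetGraph {V : Type*} (G : SimpleGraph V) {r : ℕ} (P : V → Fin r) (m : Fin r → ℕ)
    (ord : ∀ i, Fin (m i) ≃ {v : V // P v = i}) : SimpleGraph (GVert V r) :=
  SimpleGraph.fromRel (gadgetRel G P m ord)

/-- The set `𝒯` of demand pairs of the multicut instance: all pairs `(t_u, t_v)` for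
`u ≠ v`, the pairs `(s_v, s'_v)`, and the pairs `(a_i, b_i)`. -/
def demandPairs (V : Type*) (r : ℕ) : Set (GVert V r × GVert V r) :=
  {p | (∃ u v : V, u ≠ v ∧ p = (.tv u, .tv v)) ∨
       (∃ v : V, p = (.sv v, .sv' v)) ∨
       (∃ i : Fin r, p = (.av i, .bv i))}

/-- The non-terminal vertices of `G'` are the original and the primed vertices. -/
def nonTerminal {V : Type*} {r : ℕ} : GVert V r → Bool
  | .orig _ => true
  | .prime _ => true
  | _ => false

/-- `Y` is a multicut for `(G', 𝒯)`: `Y` consists of non-terminal vertices and every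
path in `G'` between the two vertices of a demand pair contains a vertex of `Y`
(equivalently, removing `Y` disconnects every demand pair). -/
def IsMulticut {V : Type*} {r : ℕ} (H : SimpleGraph (GVert V r))
    (D : Set (GVert V r × GVert V r)) (Y : Finset (GVert V r)) : Prop :=
  (∀ y ∈ Y, nonTerminal y = true) ∧
  ∀ ⦃s t : GVert V r⦄, (s, t) ∈ D →
    ∀ p : H.Walk s t, p.IsPath → ∃ v ∈ p.support, v ∈ Y

/-- `d` is an LP-feasible assignment for the multicut LP-relaxation of `(G', 𝒯)`:
`d` is nonnegative on non-terminal vertices and for every demand pair and every path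
between its two vertices, the sum of `d` over the non-terminal vertices of the path is
at least `1`. -/
def LPFeasibleMulticut {V : Type*} [DecidableEq V] {r : ℕ} (H : SimpleGraph (GVert V r))
    (D : Set (GVert V r × GVert V r)) (d : GVert V r → ℝ) : Prop :=
  (∀ v, nonTerminal v = true → 0 ≤ d v) ∧
  ∀ ⦃s t : GVert V r⦄, (s, t) ∈ D → ∀ p : H.Walk s t, p.IsPath →
    1 ≤ ∑ v ∈ p.support.toFinset.filter (fun v => nonTerminal v = true), d v

/-- The cost of a multicut LP assignment: the sum of `d` over all non-terminal
vertices. -/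
def multicutLPCost {V : Type*} [Fintype V] [DecidableEq V] {r : ℕ}
    (d : GVert V r → ℝ) : ℝ :=
  ∑ v ∈ univ.filter (fun v : GVert V r => nonTerminal v = true), d v


/-!
Each pair `(s_v, s'_v)` is joined by the path `s_v v v' s'_v`, so feasibility forces
`d_v + d_{v'} ≥ 1`, and summing over `v` bounds the cost below by `n`. Conversely the
assignment `1/2` on every non-terminal is feasible: both terminals of a demand pair have a
unique neighbour, and these two neighbours are distinct non-terminals (for `(a_i, b_i)`
because `|V_i| ≥ 2`), so every walk between them meets two non-terminals.
-/

open SimpleGraph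

lemma SimpleGraph.Walk.two_le_card_filter_support {α : Type*} [DecidableEq α]
    {H : SimpleGraph α} {s t a b : α} (p : H.Walk s t) (hst : s ≠ t)
    (hs : ∀ x, H.Adj s x → x = a) (ht : ∀ x, H.Adj t x → x = b) (hab : a ≠ b)
    {q : α → Prop} [DecidablePred q] (ha : q a) (hb : q b) :
    2 ≤ #(p.support.toFinset.filter q) := by
  have hnil := p.not_nil_of_ne hst
  have ha' : a ∈ p.support := hs _ (p.adj_snd hnil) ▸ p.getVert_mem_support 1
  have hb' : b ∈ p.support := ht _ (p.adj_penultimate hnil).symm ▸ p.getVert_mem_support _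
  exact Finset.one_lt_card.2 ⟨a, by simp [ha', ha], b, by simp [hb', hb], hab⟩

namespace gadgetGraph

variable {V : Type*} {r : ℕ} (G : SimpleGraph V) (P : V → Fin r) (m : Fin r → ℕ)
  (ord : ∀ i, Fin (m i) ≃ {v : V // P v = i})

lemma eq_of_adj_tv {u : V} {x : GVert V r} (h : (gadgetGraph G P m ord).Adj (.tv u) x) :
    x = .orig u := by
  obtain ⟨-, h | h⟩ := h <;> cases x <;> simp_all [gadgetRel]

lemma eq_of_adj_sv {u : V} {x : GVert V r} (h : (gadgetGraph G P m ord).Adj (.sv u) x) :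
    x = .orig u := by
  obtain ⟨-, h | h⟩ := h <;> cases x <;> simp_all [gadgetRel]

lemma eq_of_adj_sv' {u : V} {x : GVert V r} (h : (gadgetGraph G P m ord).Adj (.sv' u) x) :
    x = .prime u := by
  obtain ⟨-, h | h⟩ := h <;> cases x <;> simp_all [gadgetRel]

lemma eq_of_adj_av {i : Fin r} (h0 : 0 < m i) {x : GVert V r}
    (h : (gadgetGraph G P m ord).Adj (.av i) x) :
    x = .prime (ord i ⟨0, h0⟩).1 := by
  obtain ⟨-, h | h⟩ := h <;> cases x <;> simp_all [gadgetRel]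

lemma eq_of_adj_bv {i : Fin r} (h0 : 0 < m i) {x : GVert V r}
    (h : (gadgetGraph G P m ord).Adj (.bv i) x) :
    x = .prime (ord i ⟨m i - 1, Nat.sub_lt h0 Nat.one_pos⟩).1 := by
  obtain ⟨-, h | h⟩ := h <;> cases x <;> simp_all [gadgetRel]

lemma adj_of_gadgetRel {x y : GVert V r} (hne : x ≠ y) (h : gadgetRel G P m ord x y) :
    (gadgetGraph G P m ord).Adj x y :=
  (fromRel_adj _ x y).2 ⟨hne, .inl h⟩

def svPath (v : V) : (gadgetGraph G P m ord).Walk (.sv v) (.sv' v) :=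
  .cons (adj_of_gadgetRel G P m ord (y := .orig v) (by simp) rfl)
    (.cons (adj_of_gadgetRel G P m ord (y := .prime v) (by simp) rfl)
      (.cons (adj_of_gadgetRel G P m ord (x := .sv' v) (y := .prime v) (by simp) rfl).symm .nil))

lemma svPath_isPath (v : V) : (svPath G P m ord v).IsPath := by
  simp [Walk.isPath_def, svPath]

lemma filter_nonTerminal_svPath_support [DecidableEq V] (v : V) :
    (svPath G P m ord v).support.toFinset.filter (fun x => nonTerminal x = true) =
      {.orig v, .prime v} := by
  ext x
  cases x <;> simp [svPath, nonTerminal]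

end gadgetGraph

open gadgetGraph

section Cost

variable {V : Type*} [Fintype V] [DecidableEq V] {r : ℕ}

lemma multicutLPCost_eq_sum (d : GVert V r → ℝ) :
    multicutLPCost d = ∑ v : V, (d (.orig v) + d (.prime v)) := by
  have hfilter : univ.filter (fun x : GVert V r => nonTerminal x = true) =
      univ.image (Sum.elim .orig .prime) := by
    ext x
    rw [mem_filter, mem_image]
    cases x <;> simp [nonTerminal]
  rw [multicutLPCost, hfilter, sum_image (by rintro (a | a) - (b | b) - <;> simp),
    Fintype.sum_sum_type, sum_add_distrib]
  rfl

lemma card_le_multicutLPCost {G : SimpleGraph V} {P : V → Fin r} {m : Fin r → ℕ}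
    {ord : ∀ i, Fin (m i) ≃ {v : V // P v = i}} {d : GVert V r → ℝ}
    (hd : LPFeasibleMulticut (gadgetGraph G P m ord) (demandPairs V r) d) :
    (Fintype.card V : ℝ) ≤ multicutLPCost d := by
  have hpair (v : V) : 1 ≤ d (.orig v) + d (.prime v) := by
    have := hd.2 (.inr (.inl ⟨v, rfl⟩)) (svPath G P m ord v) (svPath_isPath G P m ord v)
    rwa [filter_nonTerminal_svPath_support, sum_pair (by simp)] at this
  calc (Fintype.card V : ℝ) = ∑ _v : V, (1 : ℝ) := by simp
    _ ≤ ∑ v : V, (d (.orig v) + d (.prime v)) := sum_le_sum fun v _ => hpair v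
    _ = multicutLPCost d := (multicutLPCost_eq_sum d).symm

end Cost

section HalfAssignment

variable {V : Type*} {r : ℕ}

noncomputable def halfAssignment (x : GVert V r) : ℝ := if nonTerminal x = true then 1 / 2 else 0

lemma sum_filter_nonTerminal_halfAssignment (s : Finset (GVert V r)) :
    ∑ x ∈ s.filter (fun x => nonTerminal x = true), halfAssignment x =
      #(s.filter fun x => nonTerminal x = true) / 2 := by
  have hhalf : ∀ x ∈ s.filter (fun x => nonTerminal x = true), halfAssignment x = 1 / 2 :=
    fun x hx => if_pos (mem_filter.1 hx).2
  rw [sum_congr rfl hhalf, sum_const, nsmul_eq_mul]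
  ring

lemma multicutLPCost_halfAssignment [Fintype V] [DecidableEq V] :
    multicutLPCost (halfAssignment (V := V) (r := r)) = Fintype.card V := by
  simp only [multicutLPCost_eq_sum, halfAssignment, nonTerminal, if_true, sum_const, card_univ,
    nsmul_eq_mul]
  ring

lemma halfAssignment_feasible [DecidableEq V] (G : SimpleGraph V) (P : V → Fin r)
    {m : Fin r → ℕ} (ord : ∀ i, Fin (m i) ≃ {v : V // P v = i}) (hm : ∀ i, 2 ≤ m i) :
    LPFeasibleMulticut (gadgetGraph G P m ord) (demandPairs V r) halfAssignment := by
  refine ⟨fun v hv => by simp [halfAssignment, hv], ?_⟩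
  rintro s t hst p -
  rw [sum_filter_nonTerminal_halfAssignment]
  suffices 2 ≤ #(p.support.toFinset.filter fun x => nonTerminal x = true) by
    rw [le_div_iff₀ two_pos, one_mul]
    exact_mod_cast this
  rcases hst with ⟨u, v, huv, hp⟩ | ⟨v, hp⟩ | ⟨i, hp⟩ <;>
    obtain ⟨rfl, rfl⟩ := Prod.ext_iff.1 hp
  · exact p.two_le_card_filter_support (by simpa) (fun _ => eq_of_adj_tv G P m ord)
      (fun _ => eq_of_adj_tv G P m ord) (by simpa) rfl rfl
  · exact p.two_le_card_filter_support (by simp) (fun _ => eq_of_adj_sv G P m ord)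
      (fun _ => eq_of_adj_sv' G P m ord) (by simp) rfl rfl
  · have h0 : 0 < m i := Nat.zero_lt_two.trans_le (hm i)
    have hne : (⟨0, h0⟩ : Fin (m i)) ≠ ⟨m i - 1, Nat.sub_lt h0 Nat.one_pos⟩ :=
      Fin.ne_of_val_ne (show 0 ≠ m i - 1 by have := hm i; omega)
    exact p.two_le_card_filter_support (by simp) (fun _ => eq_of_adj_av G P m ord h0)
      (fun _ => eq_of_adj_bv G P m ord h0)
      (fun h => hne ((ord i).injective (Subtype.ext (GVert.prime.inj h)))) rfl rfl

end HalfAssignment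

theorem multicut_lp_optimum_general {V : Type*} [Fintype V] [DecidableEq V]
    (G : SimpleGraph V) {r : ℕ} (P : V → Fin r) (m : Fin r → ℕ)
    (ord : ∀ i, Fin (m i) ≃ {v : V // P v = i})
    (hm : ∀ i, 2 ≤ m i) :
    (∀ d : GVert V r → ℝ,
      LPFeasibleMulticut (gadgetGraph G P m ord) (demandPairs V r) d →
        (Fintype.card V : ℝ) ≤ multicutLPCost d) ∧
    IsLeast {c : ℝ | ∃ d : GVert V r → ℝ,
        LPFeasibleMulticut (gadgetGraph G P m ord) (demandPairs V r) d ∧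
        multicutLPCost d = c}
      (Fintype.card V) :=
  ⟨fun _ => card_le_multicutLPCost,
    ⟨halfAssignment, halfAssignment_feasible G P ord hm, multicutLPCost_halfAssignment⟩,
    fun _ ⟨_, hd, hc⟩ => hc ▸ card_le_multicutLPCost hd⟩

/-- In the multicut instance `(G', 𝒯)` built from a multicoloured graph
`(G, V₁, …, V_r)` with `|V_i| ≥ 2` and `|V| = n`, every LP-feasible assignment for the
multicut LP-relaxation has cost at least `n`; consequently the optimal cost of the
multicut LP-relaxation equals `n`. -/
theorem multicut_lp_optimum {V : Type*} [Fintype V] [DecidableEq V]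
    (G : SimpleGraph V) {r : ℕ} (P : V → Fin r) (m : Fin r → ℕ)
    (ord : ∀ i, Fin (m i) ≃ {v : V // P v = i})
    (hclique : ∀ u v : V, u ≠ v → P u = P v → G.Adj u v)
    (hm : ∀ i, 2 ≤ m i) :
    (∀ d : GVert V r → ℝ,
      LPFeasibleMulticut (gadgetGraph G P m ord) (demandPairs V r) d →
        (Fintype.card V : ℝ) ≤ multicutLPCost d) ∧
    IsLeast {c : ℝ | ∃ d : GVert V r → ℝ,
        LPFeasibleMulticut (gadgetGraph G P m ord) (demandPairs V r) d ∧
        multicutLPCost d = c}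
      (Fintype.card V) :=
  multicut_lp_optimum_general G P m ord hm
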